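/- Let G be a finite group and V a primitive G-representation over an algebraically closed field of characteristic zero. Then every G-stable Lie subalgebra of sl(V) is semisimple. -/

import Mathlib

attribute [local instance] LieRing.ofAssociativeRing

/-- A representation is irreducible: `V` is nonzero and the only `G`-stable subspaces are
`⊥` and `⊤`. -/
def Representation.IsIrred {k G V : Type*} [CommSemiring k] [Monoid G]
    [AddCommMonoid V] [Module k V] (ρ : Representation k G V) : Prop :=
  Nontrivial V ∧ ∀ U : Submodule k V, (∀ g : G, ∀ v ∈ U, ρ g v ∈ U) → U = ⊥ ∨ U = ⊤

/-- A Lie subalgebra of `End(V)` is `G`-stable if it is stable under conjugation by the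
representation. -/
def Representation.StableLieSubalgebra {k G V : Type*} [CommRing k] [Group G]
    [AddCommGroup V] [Module k V] (ρ : Representation k G V)
    (L : LieSubalgebra k (Module.End k V)) : Prop :=
  ∀ g : G, ∀ f ∈ L, ρ g * f * ρ g⁻¹ ∈ L

/-- A representation is imprimitive if `V` is a direct sum of at least two nonzero subspaces
which are permuted by the action of `G`. -/
def Representation.IsImprimitive {k G V : Type*} [CommSemiring k] [Monoid G]
    [AddCommMonoid V] [Module k V] (ρ : Representation k G V) : Prop :=
  ∃ (ι : Type) (W : ι → Submodule k V),
    (∀ i, W i ≠ ⊥) ∧ (∃ i j : ι, i ≠ j) ∧ iSupIndep W ∧ iSup W = ⊤ ∧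
    ∀ (g : G) (i : ι), ∃ j : ι, (W i).map (ρ g) ≤ W j

/-! The radical of `L` is invariant under every automorphism of `L`, in particular under
conjugation by `ρ g`, and hence so is the last nonzero term `a` of its derived series, an abelian
ideal. Conjugation by `ρ g` permutes the generalized weight spaces of `a` acting on `V`; as these
decompose `V`, primitivity leaves a single weight, and it vanishes because `a` consists of traceless
maps. So `a` acts nilpotently, and by Engel's theorem its common kernel is a nonzero `G`-stable
subspace, hence all of `V`. Thus `a = 0`, and so the radical is zero. -/

open Module LieAlgebra LieModule

namespace LieIdeal

variable {R L L' : Type*} [CommRing R] [LieRing L] [LieAlgebra R L] [LieRing L']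
  [LieAlgebra R L']

lemma map_derivedSeriesOfIdeal {f : L →ₗ⁅R⁆ L'} (hf : Function.Surjective f) (I : LieIdeal R L)
    (n : ℕ) : (derivedSeriesOfIdeal R L n I).map f = derivedSeriesOfIdeal R L' n (I.map f) := by
  induction n with
  | zero => rfl
  | succ n ih => rw [derivedSeriesOfIdeal_succ, derivedSeriesOfIdeal_succ, map_bracket_eq f hf, ih]

lemma isSolvable_map {f : L →ₗ⁅R⁆ L'} (hf : Function.Surjective f) (I : LieIdeal R L)
    [IsSolvable I] : IsSolvable (I.map f) := by
  obtain ⟨n, hn⟩ := IsSolvable.solvable (R := R) (L := I)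
  rw [derivedSeries_eq_bot_iff] at hn
  refine IsSolvable.mk (R := R) (k := n) ?_
  rw [derivedSeries_eq_bot_iff, ← map_derivedSeriesOfIdeal hf, hn, map_eq_bot_iff]
  exact bot_le

end LieIdeal

namespace LieAlgebra

variable {R L L' : Type*} [CommRing R] [LieRing L] [LieAlgebra R L] [LieRing L']
  [LieAlgebra R L']

lemma map_derivedAbelianOfIdeal {e : L ≃ₗ⁅R⁆ L} {I : LieIdeal R L}
    (hI : I.map e.toLieHom = I) :
    (derivedAbelianOfIdeal I).map e.toLieHom = derivedAbelianOfIdeal I := by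
  unfold derivedAbelianOfIdeal
  split
  · exact LieIdeal.map_eq_bot_iff.mpr bot_le
  · rw [LieIdeal.map_derivedSeriesOfIdeal e.surjective, hI]

variable [IsNoetherian R L] [IsNoetherian R L']

lemma map_radical_le {f : L →ₗ⁅R⁆ L'} (hf : Function.Surjective f) :
    (radical R L).map f ≤ radical R L' :=
  have := LieIdeal.isSolvable_map hf (radical R L)
  (LieIdeal.solvable_iff_le_radical R L' _).mp this

lemma map_radical (e : L ≃ₗ⁅R⁆ L') : (radical R L).map e.toLieHom = radical R L' := by
  refine le_antisymm (map_radical_le e.surjective) fun x hx ↦ ?_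
  have : e.symm x ∈ radical R L := map_radical_le e.symm.surjective (LieIdeal.mem_map hx)
  simpa using LieIdeal.mem_map (f := e.toLieHom) this

end LieAlgebra

namespace LieModule

variable {R L M : Type*} [CommRing R] [LieRing L] [LieAlgebra R L]
  [AddCommGroup M] [Module R M] [LieRingModule L M] [LieModule R L M]

lemma mapsTo_maxTrivSubmodule_of_semiconjBy {T : Module.End R M} {σ : L → L}
    (hT : ∀ x, SemiconjBy T (toEnd R L M (σ x)) (toEnd R L M x)) :
    Set.MapsTo T (maxTrivSubmodule R L M) (maxTrivSubmodule R L M) := by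
  intro m hm
  simp only [SetLike.mem_coe, mem_maxTrivSubmodule] at hm ⊢
  intro x
  simpa [hm] using (LinearMap.congr_fun (hT x).eq m).symm

lemma mapsTo_genWeightSpace_of_semiconjBy [LieRing.IsNilpotent L] {T : Module.End R M}
    {σ : L → L} (hT : ∀ x, SemiconjBy T (toEnd R L M (σ x)) (toEnd R L M x)) (χ : L → R) :
    Set.MapsTo T (genWeightSpace M χ) (genWeightSpace M (χ ∘ σ)) := by
  intro m hm
  simp only [SetLike.mem_coe, mem_genWeightSpace] at hm ⊢
  intro x
  obtain ⟨n, hn⟩ := hm (σ x)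
  have h : SemiconjBy T (toEnd R L M (σ x) - χ (σ x) • 1) (toEnd R L M x - χ (σ x) • 1) :=
    (hT x).sub_right ((SemiconjBy.one_right T).smul_right (χ (σ x)))
  exact ⟨n, by simpa [hn] using (LinearMap.congr_fun (h.pow_right n).eq m).symm⟩

lemma trace_toEnd_of_genWeightSpace_eq_top [IsDomain R] [IsPrincipalIdealRing R]
    [Module.Free R M] [Module.Finite R M] [LieRing.IsNilpotent L] {χ : L → R}
    (h : genWeightSpace M χ = ⊤) (x : L) :
    LinearMap.trace R M (toEnd R L M x) = finrank R M • χ x := by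
  have hfin : finrank R (genWeightSpace M χ) = finrank R M := by
    rw [h]; exact finrank_top R M
  rw [← hfin, ← trace_toEnd_genWeightSpace,
    ← LinearMap.trace_restrict_eq_of_forall_mem (genWeightSpace M χ : Submodule R M) _
      (fun m ↦ by simp [h])]
  rfl

lemma isNilpotent_of_genWeightSpace_zero_eq_top [IsNoetherian R M] [LieRing.IsNilpotent L]
    (h : genWeightSpace M (0 : L → R) = ⊤) : IsNilpotent L M := by
  refine (isNilpotent_iff_forall' (R := R)).mpr fun x ↦ ?_
  obtain ⟨n, hn⟩ := exists_genWeightSpace_zero_le_ker_of_isNoetherian R M x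
  rw [h, LieSubmodule.top_toSubmodule, top_le_iff, LinearMap.ker_eq_top] at hn
  exact ⟨n, hn⟩

end LieModule

namespace Representation

variable {k G V : Type*} [Field k] [Group G] [AddCommGroup V] [Module k V]
  {ρ : Representation k G V}

-- `IsImprimitive` asks for an index type in `Type`, hence the reindexing by `Fin`.
lemma isImprimitive_of_finite {ι : Type*} [Finite ι] [Nontrivial ι] (W : ι → Submodule k V)
    (hW : ∀ i, W i ≠ ⊥) (hind : iSupIndep W) (hsup : iSup W = ⊤)
    (hperm : ∀ (g : G) (i : ι), ∃ j, (W i).map (ρ g) ≤ W j) : ρ.IsImprimitive := by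
  let e := Finite.equivFin ι
  obtain ⟨i, j, hij⟩ := exists_pair_ne ι
  refine ⟨Fin (Nat.card ι), W ∘ e.symm, fun _ ↦ hW _, ⟨e i, e j, by simpa using hij⟩,
    hind.comp e.symm.injective, (e.symm.iSup_comp (g := W)).trans hsup, fun g i ↦ ?_⟩
  obtain ⟨j, hj⟩ := hperm g (e.symm i)
  exact ⟨e j, by simpa using hj⟩

namespace StableLieSubalgebra

variable {L : LieSubalgebra k (Module.End k V)}

def conjLieEquiv (hL : ρ.StableLieSubalgebra L) (g : G) : L ≃ₗ⁅k⁆ L where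
  toFun x := ⟨ρ g * x * ρ g⁻¹, hL g x x.2⟩
  invFun x := ⟨ρ g⁻¹ * x * ρ g, by simpa using hL g⁻¹ x x.2⟩
  map_add' x y := by ext; simp
  map_smul' c x := by ext; simp
  map_lie' {x y} := by ext; simp [Ring.lie_def]
  left_inv x := by ext; simp
  right_inv x := by ext; simp

@[simp]
lemma coe_conjLieEquiv_apply (hL : ρ.StableLieSubalgebra L) (g : G) (x : L) :
    (hL.conjLieEquiv g x : Module.End k V) = ρ g * x * ρ g⁻¹ := rfl

lemma map_incl (hL : ρ.StableLieSubalgebra L) {I : LieIdeal k L}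
    (hI : ∀ g, I.map (hL.conjLieEquiv g).toLieHom = I) :
    ρ.StableLieSubalgebra ((I : LieSubalgebra k L).map L.incl) := by
  rintro g _ ⟨x, hx, rfl⟩
  refine ⟨hL.conjLieEquiv g x, ?_, rfl⟩
  rw [← hI g]
  exact LieIdeal.mem_map hx

lemma semiconjBy_toEnd_conjLieEquiv (hL : ρ.StableLieSubalgebra L) (g : G) (x : L) :
    SemiconjBy (ρ g) (toEnd k L V (hL.conjLieEquiv g⁻¹ x)) (toEnd k L V x) := by
  ext v
  simp

lemma map_genWeightSpace_le [LieRing.IsNilpotent L] (hL : ρ.StableLieSubalgebra L)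
    (g : G) (χ : L → k) :
    (genWeightSpace V χ : Submodule k V).map (ρ g) ≤
      genWeightSpace V (χ ∘ hL.conjLieEquiv g⁻¹) :=
  Submodule.map_le_iff_le_comap.mpr
    (mapsTo_genWeightSpace_of_semiconjBy (hL.semiconjBy_toEnd_conjLieEquiv g) χ)

lemma subsingleton_weight_of_not_isImprimitive [FiniteDimensional k V] [LieRing.IsNilpotent L]
    [IsTriangularizable k L V] (hL : ρ.StableLieSubalgebra L)
    (hprim : ¬ ρ.IsImprimitive) : Subsingleton (Weight k L V) := by
  refine not_nontrivial_iff_subsingleton.mp fun _ ↦ hprim <|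
    isImprimitive_of_finite (fun χ : Weight k L V ↦ (genWeightSpace V χ : Submodule k V))
      (fun χ ↦ by simpa using χ.genWeightSpace_ne_bot) ?_ ?_ fun g χ ↦ ?_
  · exact LieSubmodule.iSupIndep_toSubmodule.mpr (iSupIndep_genWeightSpace' k L V)
  · rw [← LieSubmodule.iSup_toSubmodule, iSup_genWeightSpace_eq_top' k L V,
      LieSubmodule.top_toSubmodule]
  · have hmap := hL.map_genWeightSpace_le g χ
    have hne : (genWeightSpace V χ : Submodule k V).map (ρ g) ≠ ⊥ := by
      rw [Ne, ← Submodule.map_bot (ρ g),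
        (Submodule.map_injective_of_injective (ρ.apply_bijective g).injective).eq_iff,
        LieSubmodule.toSubmodule_eq_bot]
      exact χ.genWeightSpace_ne_bot
    refine ⟨⟨_, fun h ↦ hne (eq_bot_mono hmap ?_)⟩, hmap⟩
    exact (LieSubmodule.toSubmodule_eq_bot _).mpr h

theorem eq_bot_of_isNilpotent [IsAlgClosed k] [CharZero k] [FiniteDimensional k V]
    [LieRing.IsNilpotent L] (hL : ρ.StableLieSubalgebra L) (hirr : ρ.IsIrred)
    (hprim : ¬ ρ.IsImprimitive) (htr : ∀ f ∈ L, LinearMap.trace k V f = 0) : L = ⊥ := by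
  obtain ⟨_, hirr⟩ := hirr
  have := hL.subsingleton_weight_of_not_isImprimitive hprim
  obtain ⟨χ⟩ : Nonempty (Weight k L V) := by
    by_contra! h
    simpa only [iSup_of_empty, bot_ne_top] using iSup_genWeightSpace_eq_top' k L V
  have htop : genWeightSpace V χ = ⊤ :=
    top_unique <| (iSup_genWeightSpace_eq_top' k L V).ge.trans <|
      iSup_le fun χ' ↦ by rw [Subsingleton.elim χ' χ]
  have hχ : (χ : L → k) = 0 := funext fun x ↦ by
    have h := trace_toEnd_of_genWeightSpace_eq_top htop x
    rw [show toEnd k L V x = x from rfl, htr x x.2, eq_comm, smul_eq_zero] at h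
    exact h.resolve_left (Nat.cast_ne_zero.mpr finrank_pos.ne')
  have : LieModule.IsNilpotent L V := isNilpotent_of_genWeightSpace_zero_eq_top (hχ ▸ htop)
  have htriv : (maxTrivSubmodule k L V : Submodule k V) = ⊤ := by
    refine (hirr _ fun g ↦ mapsTo_maxTrivSubmodule_of_semiconjBy
      (hL.semiconjBy_toEnd_conjLieEquiv g)).resolve_left ?_
    rw [LieSubmodule.toSubmodule_eq_bot]
    exact (LieSubmodule.nontrivial_iff_ne_bot k L V).mp (nontrivial_max_triv_of_isNilpotent k L V)
  refine (LieSubalgebra.eq_bot_iff L).mpr fun f hf ↦ LinearMap.ext fun v ↦ ?_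
  have hv : v ∈ maxTrivSubmodule k L V := by
    rw [← LieSubmodule.mem_toSubmodule, htriv]
    trivial
  exact hv ⟨f, hf⟩

end StableLieSubalgebra

end Representation

theorem primitive_subalgebras_semisimple_general
    {k G V : Type*} [Field k] [IsAlgClosed k] [CharZero k] [Group G]
    [AddCommGroup V] [Module k V] [FiniteDimensional k V]
    (ρ : Representation k G V) (hirr : ρ.IsIrred) (hprim : ¬ ρ.IsImprimitive)
    (L : LieSubalgebra k (Module.End k V))
    (hsl : ∀ f ∈ L, LinearMap.trace k V f = 0)
    (hstab : ρ.StableLieSubalgebra L) :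
    LieAlgebra.radical k ↥L = ⊥ := by
  set a := derivedAbelianOfIdeal (radical k L)
  have ha (g : G) : a.map (hstab.conjLieEquiv g).toLieHom = a :=
    map_derivedAbelianOfIdeal (map_radical _)
  set A := (a : LieSubalgebra k L).map L.incl
  have : IsLieAbelian A := (lie_abelian_iff_equiv_lie_abelian
    ((a : LieSubalgebra k L).equivMapOfInjective L.incl Subtype.coe_injective)).mp
    (abelian_derivedAbelianOfIdeal _)
  have hA : A = ⊥ := (hstab.map_incl ha).eq_bot_of_isNilpotent hirr hprim
    fun f ⟨x, _, hx⟩ ↦ hx ▸ hsl x x.2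
  rw [← abelian_of_solvable_ideal_eq_bot_iff, eq_bot_iff]
  intro x hx
  have : (x : Module.End k V) ∈ A := ⟨x, hx, rfl⟩
  rw [hA, LieSubalgebra.mem_bot] at this
  exact (LieSubmodule.mem_bot x).mpr (Subtype.ext this)

/-- If `V` is a primitive representation of a finite group `G` over an
algebraically closed field of characteristic zero, then every `G`-stable Lie subalgebra of
`sl(V)` is semisimple (has trivial radical). -/
theorem primitive_subalgebras_semisimple
    {k G V : Type*} [Field k] [IsAlgClosed k] [CharZero k] [Group G] [Finite G]
    [AddCommGroup V] [Module k V] [FiniteDimensional k V]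
    (ρ : Representation k G V) (hirr : ρ.IsIrred) (hprim : ¬ ρ.IsImprimitive)
    (L : LieSubalgebra k (Module.End k V))
    (hsl : ∀ f ∈ L, LinearMap.trace k V f = 0)
    (hstab : ρ.StableLieSubalgebra L) :
    LieAlgebra.radical k ↥L = ⊥ :=
  primitive_subalgebras_semisimple_general ρ hirr hprim L hsl hstab
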